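/- arXiv:1108.1559 — 4 statements merged into one kernel-verified Lean document; each statement's English description precedes it below -/
import Mathlib

section
/- For Rule 136, defined by g(x,y,z) = y·z, and any n ≥ 1, the triangular blocks b of size n+1 with gⁿ(b) = 1 are exactly those whose entire bottom row equals 1 (b(i,1) = 1 for all 1 ≤ i ≤ n+1), with all other cells arbitrary. Consequently Pₙ(1) = ρ^(n+1) under the Bernoulli-ρ measure. -/
/-- The set of lattice positions of a triangular block of size `r`:
pairs `(i,j)` with `i,j ≥ 1` and `i + j ≤ r + 1`. -/
def Tri (r : ℕ) : Finset (ℕ × ℕ) :=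
  (Finset.range (r + 2) ×ˢ Finset.range (r + 2)).filter
    (fun p => 1 ≤ p.1 ∧ 1 ≤ p.2 ∧ p.1 + p.2 ≤ r + 1)

/-- A triangular block of size `r`: an assignment of values in `{0,1}` to the
positions of `Tri r`. -/
def TriBlock (r : ℕ) := {p // p ∈ Tri r} → Fin 2

instance (r : ℕ) : Fintype (TriBlock r) := by unfold TriBlock; infer_instance
instance (r : ℕ) : DecidableEq (TriBlock r) := by unfold TriBlock; infer_instance

/-- Extend a triangular block to a total function on `ℕ × ℕ` (zero outside). -/
def ext {r : ℕ} (b : TriBlock r) : ℕ → ℕ → Fin 2 :=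
  fun i j => if h : (i, j) ∈ Tri r then b ⟨(i, j), h⟩ else 0

/-- The value of block `b` at position `(i,j)` (zero outside the block). -/
def cell {r : ℕ} (b : TriBlock r) (i j : ℕ) : Fin 2 := ext b i j

/-- One application of the local rule `g` (arguments: top, center, right)
at every site: `c(i,j) = g(b(i,j+1), b(i,j), b(i+1,j))`. -/
def step (g : Fin 2 → Fin 2 → Fin 2 → Fin 2) (s : ℕ → ℕ → Fin 2) : ℕ → ℕ → Fin 2 :=
  fun i j => g (s i (j + 1)) (s i j) (s (i + 1) j)

/-- Restrict a total function to a triangular block of size `r`. -/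
def contract (r : ℕ) (s : ℕ → ℕ → Fin 2) : TriBlock r := fun q => s q.1.1 q.1.2

/-- The block evolution operator: maps a block of size `m` (intended `m = r+1`)
to a block of size `r` via `c(i,j) = g(b(i,j+1), b(i,j), b(i+1,j))`. -/
def evolve (g : Fin 2 → Fin 2 → Fin 2 → Fin 2) {m : ℕ} (r : ℕ) (b : TriBlock m) :
    TriBlock r := contract r (step g (ext b))

/-- The `n`-fold iterate of the block evolution operator, from blocks of size `m`
(intended `m = r + n`) to blocks of size `r`. -/
def evolveN (g : Fin 2 → Fin 2 → Fin 2 → Fin 2) (n : ℕ) {m : ℕ} (r : ℕ)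
    (b : TriBlock m) : TriBlock r := contract r ((step g)^[n] (ext b))

/-- The single-cell block consisting of a `1`. -/
def oneBlock : TriBlock 1 := fun _ => 1

/-- Number of cells in state 1 in a block. -/
def numOnes {r : ℕ} (b : TriBlock r) : ℕ :=
  (@Finset.filter _ (fun x => b x = 1) (fun x => instDecidableEqFin 2 (b x) 1) Finset.univ).card

/-- Number of cells in state 0 in a block. -/
def numZeros {r : ℕ} (b : TriBlock r) : ℕ :=
  (@Finset.filter _ (fun x => b x = 0) (fun x => instDecidableEqFin 2 (b x) 0) Finset.univ).card

/-- The set of `n`-step preimages of the single-cell block `1`: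
blocks of size `n + 1` mapped by `n` iterations of the block evolution
operator of `g` to the single cell `1`. -/
def preimages (g : Fin 2 → Fin 2 → Fin 2 → Fin 2) (n : ℕ) :
    Finset (TriBlock (n + 1)) :=
  Finset.univ.filter (fun b => evolveN g n 1 b = oneBlock)

/-- `Pₙ(1)`: the density of ones after `n` iterations, starting from a
Bernoulli-`ρ` initial measure, computed by summing the probabilities of all
`n`-step preimages of the single cell `1`. -/
noncomputable def Pn (g : Fin 2 → Fin 2 → Fin 2 → Fin 2) (n : ℕ) (ρ : ℝ) : ℝ :=
  ∑ a ∈ preimages g n, ρ ^ numOnes a * (1 - ρ) ^ numZeros a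


/-- Rule 136: `g(x,y,z) = y·z`. -/
def g136 : Fin 2 → Fin 2 → Fin 2 → Fin 2 := fun _ y z => y * z

/-
Rule 136 is the AND of the centre and right neighbours, so after `n` steps a cell equals `1`
exactly when the `n + 1` cells of the bottom row starting at it were all `1`; the top of the
triangle plays no role.  Hence the preimages of the single cell `1` are the blocks with an
all-ones bottom row, and their Bernoulli weights factor over the cells: each bottom-row cell
contributes `ρ` and every other cell contributes `ρ + (1 - ρ) = 1`.
-/

open Finset

lemma fin2_mul_eq_one_iff (a b : Fin 2) : a * b = 1 ↔ a = 1 ∧ b = 1 := by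
  revert a b; decide

lemma iterate_step_g136_eq_one_iff (n : ℕ) (s : ℕ → ℕ → Fin 2) (i j : ℕ) :
    (step g136)^[n] s i j = 1 ↔ ∀ k ≤ n, s (i + k) j = 1 := by
  induction n generalizing i with
  | zero => simp
  | succ n ih =>
    rw [Function.iterate_succ_apply']
    change (step g136)^[n] s i j * (step g136)^[n] s (i + 1) j = 1 ↔ _
    rw [fin2_mul_eq_one_iff, ih, ih]
    constructor
    · rintro ⟨h₀, h₁⟩ (_ | k) hk
      · exact h₀ 0 (Nat.zero_le n)
      · simpa [add_assoc, add_comm 1 k] using h₁ k (by omega)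
    · intro h
      exact ⟨fun k hk => h k (by omega),
        fun k hk => by simpa [add_assoc, add_comm 1 k] using h (k + 1) (by omega)⟩

theorem evolveN_g136_eq_oneBlock_iff (n : ℕ) (b : TriBlock (n + 1)) :
    evolveN g136 n 1 b = oneBlock ↔ ∀ i, 1 ≤ i → i ≤ n + 1 → cell b i 1 = 1 := by
  have apex : ((1, 1) : ℕ × ℕ) ∈ Tri 1 := by decide
  have apex_iff :
      (step g136)^[n] (ext b) 1 1 = 1 ↔ ∀ i, 1 ≤ i → i ≤ n + 1 → cell b i 1 = 1 := by
    rw [iterate_step_g136_eq_one_iff]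
    refine ⟨fun h i hi₁ hi₂ => ?_, fun h k hk => h (1 + k) (by omega) (by omega)⟩
    have := h (i - 1) (by omega)
    rwa [show 1 + (i - 1) = i by omega] at this
  rw [← apex_iff]
  constructor
  · intro h
    exact congrFun h ⟨(1, 1), apex⟩
  · intro h
    funext ⟨⟨i, j⟩, hq⟩
    obtain ⟨rfl, rfl⟩ : i = 1 ∧ j = 1 := by simp only [Tri, mem_filter] at hq; omega
    exact h

def bottomRow (r : ℕ) : Finset {p // p ∈ Tri r} :=
  univ.filter fun q => q.1.2 = 1

lemma card_bottomRow (r : ℕ) : #(bottomRow r) = r := by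
  have : (Tri r).filter (fun p => p.2 = 1) = Icc 1 r ×ˢ {1} := by
    ext ⟨i, j⟩
    simp only [Tri, mem_filter, mem_product, mem_range, mem_Icc, mem_singleton]
    omega
  rw [bottomRow, univ_eq_attach, filter_attach (fun p : ℕ × ℕ => p.2 = 1), card_map,
    card_attach, this, card_product, Nat.card_Icc, card_singleton]
  omega

lemma cell_of_mem {r i j : ℕ} (b : TriBlock r) (h : (i, j) ∈ Tri r) :
    cell b i j = b ⟨(i, j), h⟩ :=
  dif_pos h

lemma mem_preimages_g136_iff (n : ℕ) (b : TriBlock (n + 1)) :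
    b ∈ preimages g136 n ↔ ∀ x ∈ bottomRow (n + 1), b x = 1 := by
  rw [preimages, mem_filter, evolveN_g136_eq_oneBlock_iff]
  simp only [mem_univ, true_and]
  constructor
  · rintro h ⟨⟨i, j⟩, hq⟩ hx
    obtain rfl : j = 1 := (mem_filter.mp hx).2
    have : 1 ≤ i ∧ i ≤ n + 1 := by simp only [Tri, mem_filter] at hq; omega
    rw [← cell_of_mem b hq]
    exact h i this.1 this.2
  · intro h i hi₁ hi₂
    have hq : ((i, 1) : ℕ × ℕ) ∈ Tri (n + 1) := by
      simp only [Tri, mem_filter, mem_product, mem_range]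
      omega
    rw [cell_of_mem b hq]
    exact h _ (by simp [bottomRow])

def bernoulliWeight (ρ : ℝ) (v : Fin 2) : ℝ :=
  if v = 1 then ρ else 1 - ρ

lemma pow_card_eq_one_mul_pow_card_eq_zero {ι : Type*} [Fintype ι] (ρ : ℝ) (b : ι → Fin 2) :
    ρ ^ #{x | b x = 1} * (1 - ρ) ^ #{x | b x = 0} = ∏ x, bernoulliWeight ρ (b x) := by
  have : (univ.filter fun x => b x = 0) = univ.filter fun x => b x ≠ 1 :=
    filter_congr fun x _ => by generalize b x = v; revert v; decide
  rw [this]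
  simp only [bernoulliWeight]
  rw [prod_ite, prod_const, prod_const]

lemma pow_numOnes_mul_pow_numZeros {r : ℕ} (ρ : ℝ) (b : TriBlock r) :
    ρ ^ numOnes b * (1 - ρ) ^ numZeros b = ∏ x, bernoulliWeight ρ (b x) :=
  pow_card_eq_one_mul_pow_card_eq_zero ρ b

lemma sum_prod_bernoulliWeight_eq_pow {ι : Type*} [Fintype ι] [DecidableEq ι] (S : Finset ι)
    (T : Finset (ι → Fin 2)) (hT : ∀ b, b ∈ T ↔ ∀ x ∈ S, b x = 1) (ρ : ℝ) :
    ∑ b ∈ T, ∏ x, bernoulliWeight ρ (b x) = ρ ^ #S := by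
  have hT' : T = Fintype.piFinset fun x => if x ∈ S then {1} else univ := by
    ext b
    simp only [hT, Fintype.mem_piFinset]
    refine forall_congr' fun x => ?_
    split_ifs <;> simp [*]
  have hcol : ∀ x, ∑ v ∈ (if x ∈ S then {1} else univ), bernoulliWeight ρ v =
      if x ∈ S then ρ else 1 := by
    intro x
    split_ifs <;> simp [bernoulliWeight, Fin.sum_univ_two]
  rw [hT', ← prod_univ_sum, prod_congr rfl fun x _ => hcol x, prod_ite_mem, univ_inter,
    prod_const]

theorem stmt2_general (n : ℕ) (ρ : ℝ) :
    (∀ b : TriBlock (n + 1),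
        evolveN g136 n 1 b = oneBlock ↔
          ∀ i, 1 ≤ i → i ≤ n + 1 → cell b i 1 = 1) ∧
      Pn g136 n ρ = ρ ^ (n + 1) := by
  refine ⟨evolveN_g136_eq_oneBlock_iff n, ?_⟩
  calc Pn g136 n ρ = ∑ b ∈ preimages g136 n, ∏ x, bernoulliWeight ρ (b x) := by
        simp only [Pn, pow_numOnes_mul_pow_numZeros]
    _ = ρ ^ #(bottomRow (n + 1)) :=
        sum_prod_bernoulliWeight_eq_pow _ _ (mem_preimages_g136_iff n) ρ
    _ = ρ ^ (n + 1) := by rw [card_bottomRow]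

/-- for Rule 136 and `n ≥ 1`, the `n`-step preimages of the single
cell `1` are exactly the size-`n+1` blocks whose whole bottom row is `1`
(`b(i,1) = 1` for all `1 ≤ i ≤ n+1`); consequently `Pₙ(1) = ρ^(n+1)`. -/
theorem stmt2 (n : ℕ) (hn : 1 ≤ n) (ρ : ℝ) (hρ : ρ ∈ Set.Icc (0 : ℝ) 1) :
    (∀ b : TriBlock (n + 1),
        evolveN g136 n 1 b = oneBlock ↔
          ∀ i, 1 ≤ i → i ≤ n + 1 → cell b i 1 = 1) ∧
      Pn g136 n ρ = ρ ^ (n + 1) :=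
  stmt2_general n ρ
end

section
/- Let g : {0,1}³ → {0,1} be permutive in the center variable. Then for every n ≥ 1, the number of triangular blocks of size n+1 mapping to the single-cell block 1 under gⁿ equals 2^((n²+3n+2)/2 − 1) = 2^((n²+3n)/2), i.e., exactly half of all triangular blocks of size n+1. -/
/-!
Permutivity in the center makes the cell `(1,1)` of the `n`-th image a bijective function of the
initial cell `(1,1)`, the other initial cells being fixed: after one step the new value at `(1,1)`
is `g x y z` with `y` the old one, and no other cell that can still influence `(1,1)` has seen `y`.
Hence flipping the initial cell `(1,1)` is an involution on blocks of size `n + 1` exchanging the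
preimages of the single cell `1` with the other blocks, so the preimages are exactly half of all
`2 ^ ((n + 1) (n + 2) / 2)` blocks.
-/

open Function

lemma two_mul_card_Tri (r : ℕ) : 2 * (Tri r).card = r * (r + 1) := by
  induction r with
  | zero => decide
  | succ r ih =>
    have h_low : (Tri (r + 1)).filter (fun p => p.1 + p.2 ≤ r + 1) = Tri r := by
      ext ⟨a, b⟩
      simp only [Tri, Finset.mem_filter, Finset.mem_product, Finset.mem_range]
      omega
    have h_diag : (Tri (r + 1)).filter (fun p => ¬ p.1 + p.2 ≤ r + 1)
        = (Finset.range (r + 1)).image (fun i => (i + 1, r + 1 - i)) := by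
      ext ⟨a, b⟩
      simp only [Tri, Finset.mem_filter, Finset.mem_product, Finset.mem_range, Finset.mem_image,
        Prod.mk.injEq]
      constructor
      · intro h
        exact ⟨a - 1, by omega, by omega, by omega⟩
      · rintro ⟨i, hi, rfl, rfl⟩
        omega
    have h_card_diag :
        ((Finset.range (r + 1)).image (fun i => (i + 1, r + 1 - i))).card = r + 1 :=
      (Finset.card_image_of_injective _ fun i k h => by simpa using congrArg Prod.fst h).trans
        (Finset.card_range _)
    rw [← Finset.card_filter_add_card_filter_not (fun p : ℕ × ℕ => p.1 + p.2 ≤ r + 1), h_low,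
      h_diag, h_card_diag, mul_add, ih]
    ring

lemma card_TriBlock (r : ℕ) : Fintype.card (TriBlock r) = 2 ^ (Tri r).card := by
  unfold TriBlock
  rw [Fintype.card_fun, Fintype.card_coe, Fintype.card_fin]

section Evolution

def updateAt (s : ℕ → ℕ → Fin 2) (i j : ℕ) (y : Fin 2) : ℕ → ℕ → Fin 2 :=
  fun i' j' => if i' = i ∧ j' = j then y else s i' j'

variable (g : Fin 2 → Fin 2 → Fin 2 → Fin 2)

lemma iterate_step_congr (n : ℕ) {s t : ℕ → ℕ → Fin 2} {i j : ℕ}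
    (h : ∀ i' j', i ≤ i' → j ≤ j' → i' + j' ≤ i + j + n → s i' j' = t i' j') :
    (step g)^[n] s i j = (step g)^[n] t i j := by
  induction n generalizing s t with
  | zero => simpa using h i j le_rfl le_rfl le_rfl
  | succ n ih =>
    refine ih fun i' j' hi hj hsum => ?_
    simp only [step]
    rw [h i' (j' + 1) hi (by omega) (by omega), h i' j' hi hj (by omega),
      h (i' + 1) j' (by omega) hj (by omega)]

lemma step_updateAt_of_le (s : ℕ → ℕ → Fin 2) (i j : ℕ) (y : Fin 2) {i' j' : ℕ}
    (hi : i ≤ i') (hj : j ≤ j') :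
    step g (updateAt s i j y) i' j'
      = updateAt (step g s) i j (g (s i (j + 1)) y (s (i + 1) j)) i' j' := by
  by_cases h : i' = i ∧ j' = j
  · obtain ⟨rfl, rfl⟩ := h
    simp [step, updateAt]
  · simp only [step, updateAt, if_neg h]
    rw [if_neg (by omega), if_neg (by omega)]

variable {g}

lemma bijective_iterate_step_updateAt (hg : ∀ x z, Bijective fun y => g x y z) (n : ℕ)
    (s : ℕ → ℕ → Fin 2) (i j : ℕ) :
    Bijective fun y => (step g)^[n] (updateAt s i j y) i j := by
  induction n generalizing s with
  | zero => simp [updateAt]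
  | succ n ih =>
    have h_comp : (fun y => (step g)^[n + 1] (updateAt s i j y) i j)
        = (fun y' => (step g)^[n] (updateAt (step g s) i j y') i j)
          ∘ fun y => g (s i (j + 1)) y (s (i + 1) j) := by
      funext y
      exact iterate_step_congr g n fun i' j' hi hj _ => step_updateAt_of_le g s i j y hi hj
    rw [h_comp]
    exact (ih _).comp (hg _ _)

end Evolution

section Blocks

variable {r : ℕ}

def flipAt (p : {p // p ∈ Tri r}) (b : TriBlock r) : TriBlock r :=
  fun q => if q = p then b q + 1 else b q

lemma ext_eq_updateAt (b : TriBlock r) (p : {p // p ∈ Tri r}) :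
    ext b = updateAt (ext b) p.1.1 p.1.2 (b p) := by
  funext i j
  by_cases h : i = p.1.1 ∧ j = p.1.2
  · obtain ⟨rfl, rfl⟩ := h
    simp [ext, updateAt]
  · simp [updateAt, h]

lemma ext_flipAt (b : TriBlock r) (p : {p // p ∈ Tri r}) :
    ext (flipAt p b) = updateAt (ext b) p.1.1 p.1.2 (b p + 1) := by
  funext i j
  by_cases h : i = p.1.1 ∧ j = p.1.2
  · obtain ⟨rfl, rfl⟩ := h
    simp [ext, updateAt, flipAt]
  · have hne : ∀ hm : (i, j) ∈ Tri r, (⟨(i, j), hm⟩ : {p // p ∈ Tri r}) ≠ p := by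
      rintro hm rfl
      exact h ⟨rfl, rfl⟩
    simp only [ext, updateAt, flipAt, if_neg h]
    split_ifs with hm hq
    · exact absurd hq (hne hm)
    all_goals rfl

lemma flipAt_involutive (p : {p // p ∈ Tri r}) : Involutive (flipAt p) := by
  intro b
  funext q
  have h_two : ∀ v : Fin 2, v + 1 + 1 = v := by decide
  by_cases h : q = p <;> simp [flipAt, h, h_two]

variable {g : Fin 2 → Fin 2 → Fin 2 → Fin 2}

lemma iterate_step_ext_flipAt_ne (hg : ∀ x z, Bijective fun y => g x y z) (n : ℕ)
    (p : {p // p ∈ Tri r}) (b : TriBlock r) :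
    (step g)^[n] (ext (flipAt p b)) p.1.1 p.1.2 ≠ (step g)^[n] (ext b) p.1.1 p.1.2 := by
  intro h
  rw [ext_flipAt] at h
  conv_rhs at h => rw [ext_eq_updateAt b p]
  have h_ne : ∀ v : Fin 2, v + 1 ≠ v := by decide
  exact h_ne _ ((bijective_iterate_step_updateAt hg n (ext b) _ _).injective h)

lemma two_mul_card_filter_iterate_step_eq_one (hg : ∀ x z, Bijective fun y => g x y z)
    (n : ℕ) (p : {p // p ∈ Tri r}) :
    2 * (Finset.univ.filter fun b : TriBlock r => (step g)^[n] (ext b) p.1.1 p.1.2 = 1).card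
      = Fintype.card (TriBlock r) := by
  have h_fin_two : ∀ u v : Fin 2, u ≠ v → (u = 1 ↔ ¬ v = 1) := by decide
  have h_swap :
      (Finset.univ.filter fun b : TriBlock r => (step g)^[n] (ext b) p.1.1 p.1.2 = 1).card
      = (Finset.univ.filter fun b : TriBlock r => ¬ (step g)^[n] (ext b) p.1.1 p.1.2 = 1).card := by
    refine Finset.card_nbij' (flipAt p) (flipAt p) ?_ ?_ (fun b _ => flipAt_involutive p b)
      (fun b _ => flipAt_involutive p b)
    all_goals
      intro b hb
      simp only [Finset.coe_filter, Finset.mem_univ, true_and, Set.mem_ofPred_eq] at hb ⊢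
    · exact (h_fin_two _ _ (iterate_step_ext_flipAt_ne hg n p b).symm).1 hb
    · exact (h_fin_two _ _ (iterate_step_ext_flipAt_ne hg n p b)).2 hb
  rw [two_mul, ← Finset.card_univ, ← Finset.card_filter_add_card_filter_not
    (s := Finset.univ) (fun b : TriBlock r => (step g)^[n] (ext b) p.1.1 p.1.2 = 1), ← h_swap]

end Blocks

lemma evolveN_eq_oneBlock_iff (g : Fin 2 → Fin 2 → Fin 2 → Fin 2) (n : ℕ) {m : ℕ}
    (b : TriBlock m) : evolveN g n 1 b = oneBlock ↔ (step g)^[n] (ext b) 1 1 = 1 := by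
  have h_Tri_one : ∀ q : {p // p ∈ Tri 1}, q.1 = (1, 1) := by
    rintro ⟨⟨i, j⟩, hq⟩
    simp only [Tri, Finset.mem_filter, Finset.mem_product, Finset.mem_range] at hq
    ext <;> simp <;> omega
  constructor
  · intro h
    simpa [evolveN, contract, oneBlock] using congrFun h ⟨(1, 1), by decide⟩
  · intro h
    funext q
    simpa [evolveN, contract, oneBlock, h_Tri_one q] using h

lemma two_mul_card_preimages {g : Fin 2 → Fin 2 → Fin 2 → Fin 2}
    (hg : ∀ x z, Bijective fun y => g x y z) (n : ℕ) :
    2 * (preimages g n).card = Fintype.card (TriBlock (n + 1)) := by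
  have h_origin : ((1, 1) : ℕ × ℕ) ∈ Tri (n + 1) := by
    simp only [Tri, Finset.mem_filter, Finset.mem_product, Finset.mem_range]
    omega
  simp only [preimages, evolveN_eq_oneBlock_iff]
  exact two_mul_card_filter_iterate_step_eq_one hg n ⟨(1, 1), h_origin⟩

theorem stmt6_general (g : Fin 2 → Fin 2 → Fin 2 → Fin 2)
    (hg : ∀ x z, Function.Bijective (fun y => g x y z))
    (n : ℕ) :
    (preimages g n).card = 2 ^ ((n ^ 2 + 3 * n) / 2) ∧
      2 * (preimages g n).card = Fintype.card (TriBlock (n + 1)) := by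
  have h_half := two_mul_card_preimages hg n
  have h_card_Tri : (Tri (n + 1)).card = (n ^ 2 + 3 * n) / 2 + 1 := by
    have := two_mul_card_Tri (n + 1)
    have : (n + 1) * (n + 1 + 1) = n ^ 2 + 3 * n + 2 := by ring
    omega
  have h_card : Fintype.card (TriBlock (n + 1)) = 2 ^ ((n ^ 2 + 3 * n) / 2) * 2 := by
    rw [card_TriBlock, h_card_Tri, pow_succ]
  exact ⟨by omega, h_half⟩

/-- if `g` is permutive in the center variable, then for every
`n ≥ 1` the number of size-`n+1` blocks mapping to the single cell `1` under
`gⁿ` equals `2^((n²+3n)/2)`, i.e. exactly half of all size-`n+1` blocks. -/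
theorem stmt6 (g : Fin 2 → Fin 2 → Fin 2 → Fin 2)
    (hg : ∀ x z, Function.Bijective (fun y => g x y z))
    (n : ℕ) (hn : 1 ≤ n) :
    (preimages g n).card = 2 ^ ((n ^ 2 + 3 * n) / 2) ∧
      2 * (preimages g n).card = Fintype.card (TriBlock (n + 1)) :=
  stmt6_general g hg n
end

section
/- Let g : {0,1}³ → {0,1} be permutive in the top variable (for all fixed y,z the map x ↦ g(x,y,z) is a bijection). Then for every n ≥ 1 and every triangular block b of size n, the number of triangular blocks c of size n+1 with g(c) = b is exactly 2^(n+1). -/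
/-!
The cells `(i, 1)` of the base row of a block `c` of size `n + 1` can be chosen freely, and they
determine `c` once its image `b` is fixed: since `b(i, j) = g(c(i, j + 1), c(i, j), c(i + 1, j))`
and `g` is a bijection in its first argument, row `j + 1` of `c` is recovered from row `j` of `c`
and row `j` of `b`. Hence the preimages of `b` correspond bijectively to the `2 ^ (n + 1)` base rows.
-/

lemma mem_Tri {r i j : ℕ} : (i, j) ∈ Tri r ↔ 1 ≤ i ∧ 1 ≤ j ∧ i + j ≤ r + 1 := by
  simp only [Tri, Finset.mem_filter, Finset.mem_product, Finset.mem_range]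
  omega

lemma cell_eq {r : ℕ} (b : TriBlock r) {i j : ℕ} (h : (i, j) ∈ Tri r) :
    cell b i j = b ⟨(i, j), h⟩ := by
  simp [cell, ext, h]

lemma eq_of_cell_eq {r : ℕ} {c c' : TriBlock r}
    (h : ∀ i j, (i, j) ∈ Tri r → cell c i j = cell c' i j) : c = c' := by
  funext ⟨⟨i, j⟩, hq⟩
  rw [← cell_eq c hq, ← cell_eq c' hq]
  exact h i j hq

lemma evolve_apply (g : Fin 2 → Fin 2 → Fin 2 → Fin 2) {m r : ℕ} (c : TriBlock m)
    {i j : ℕ} (h : (i, j) ∈ Tri r) :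
    evolve g r c ⟨(i, j), h⟩ = g (cell c i (j + 1)) (cell c i j) (cell c (i + 1) j) := rfl

def baseRow {r : ℕ} (c : TriBlock (r + 1)) : Fin (r + 1) → Fin 2 :=
  fun i => cell c (i + 1) 1

section

variable (g : Fin 2 → Fin 2 → Fin 2 → Fin 2)

theorem eq_of_evolve_eq_of_baseRow_eq (hg : ∀ y z, Function.Injective (fun x => g x y z))
    {r : ℕ} {c c' : TriBlock (r + 1)} (h : evolve g r c = evolve g r c')
    (hrow : baseRow c = baseRow c') : c = c' := by
  suffices rows : ∀ j, 1 ≤ j → ∀ i, (i, j) ∈ Tri (r + 1) → cell c i j = cell c' i j from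
    eq_of_cell_eq fun i j hq => rows j (mem_Tri.1 hq).2.1 i hq
  refine Nat.le_induction ?base ?succ
  case base =>
    intro i hq
    obtain ⟨k, rfl⟩ : ∃ k, i = k + 1 := ⟨i - 1, by rw [mem_Tri] at hq; omega⟩
    exact congrFun hrow ⟨k, by rw [mem_Tri] at hq; omega⟩
  case succ =>
    intro j hj ih i hq
    rw [mem_Tri] at hq
    have hb : (i, j) ∈ Tri r := mem_Tri.2 (by omega)
    have hcell := congrFun h ⟨(i, j), hb⟩
    rw [evolve_apply, evolve_apply, ih i (mem_Tri.2 (by omega)),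
      ih (i + 1) (mem_Tri.2 (by omega))] at hcell
    exact hg _ _ hcell

/-- Indexed row first: `liftRow g hg s a j i` is the cell `(i, j)` of the block lifting `s`. -/
noncomputable def liftRow (hg : ∀ y z, Function.Surjective (fun x => g x y z))
    (s : ℕ → ℕ → Fin 2) (a : ℕ → Fin 2) : ℕ → ℕ → Fin 2
  | 0, _ => 0
  | 1, i => a i
  | j + 2, i => Function.surjInv (hg (liftRow hg s a (j + 1) i) (liftRow hg s a (j + 1) (i + 1)))
      (s i (j + 1))

lemma step_liftRow (hg : ∀ y z, Function.Surjective (fun x => g x y z))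
    (s : ℕ → ℕ → Fin 2) (a : ℕ → Fin 2) {i j : ℕ} (hj : 1 ≤ j) :
    step g (fun i j => liftRow g hg s a j i) i j = s i j := by
  obtain ⟨k, rfl⟩ : ∃ k, j = k + 1 := ⟨j - 1, by omega⟩
  exact Function.surjInv_eq (hg _ _) _

theorem exists_evolve_eq_baseRow_eq (hg : ∀ y z, Function.Surjective (fun x => g x y z))
    {r : ℕ} (b : TriBlock r) (f : Fin (r + 1) → Fin 2) :
    ∃ c : TriBlock (r + 1), evolve g r c = b ∧ baseRow c = f := by
  set a : ℕ → Fin 2 := fun i => if h : i - 1 < r + 1 then f ⟨i - 1, h⟩ else 0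
  set L : ℕ → ℕ → Fin 2 := fun i j => liftRow g hg (cell b) a j i
  have cell_contract : ∀ i j, (i, j) ∈ Tri (r + 1) → cell (contract (r + 1) L) i j = L i j :=
    fun i j hq => cell_eq _ hq
  refine ⟨contract (r + 1) L, eq_of_cell_eq fun i j hq => ?_, funext fun i => ?_⟩
  · have hm := mem_Tri.1 hq
    rw [cell_eq _ hq, evolve_apply, cell_contract i (j + 1) (mem_Tri.2 (by omega)),
      cell_contract i j (mem_Tri.2 (by omega)), cell_contract (i + 1) j (mem_Tri.2 (by omega))]
    exact step_liftRow g hg (cell b) a hm.2.1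
  · rw [baseRow, cell_contract _ _ (mem_Tri.2 (by omega))]
    simp [L, a, liftRow, i.is_le]

end

theorem stmt7_general (g : Fin 2 → Fin 2 → Fin 2 → Fin 2)
    (hg : ∀ y z, Function.Bijective (fun x => g x y z))
    (n : ℕ) (b : TriBlock n) :
    (Finset.univ.filter (fun c : TriBlock (n + 1) => evolve g n c = b)).card
      = 2 ^ (n + 1) := by
  calc (Finset.univ.filter (fun c : TriBlock (n + 1) => evolve g n c = b)).card
      = (Finset.univ : Finset (Fin (n + 1) → Fin 2)).card := by
        refine Finset.card_nbij baseRow (fun _ _ => Finset.mem_univ _) ?_ ?_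
        · intro c hc c' hc' hrow
          simp only [Finset.coe_filter, Finset.mem_univ, true_and, Set.mem_ofPred_eq] at hc hc'
          exact eq_of_evolve_eq_of_baseRow_eq g (fun y z => (hg y z).1) (hc.trans hc'.symm) hrow
        · intro f _
          obtain ⟨c, hc, hrow⟩ := exists_evolve_eq_baseRow_eq g (fun y z => (hg y z).2) b f
          exact ⟨c, by simpa using hc, hrow⟩
    _ = 2 ^ (n + 1) := by simp

/-- if `g` is permutive in the top variable, then every triangular
block of size `n` (`n ≥ 1`) has exactly `2^(n+1)` one-step preimages under the
block evolution operator. -/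
theorem stmt7 (g : Fin 2 → Fin 2 → Fin 2 → Fin 2)
    (hg : ∀ y z, Function.Bijective (fun x => g x y z))
    (n : ℕ) (hn : 1 ≤ n) (b : TriBlock n) :
    (Finset.univ.filter (fun c : TriBlock (n + 1) => evolve g n c = b)).card
      = 2 ^ (n + 1) :=
  stmt7_general g hg n b
end

section
/- If a local rule g : {0,1}³ → {0,1} is permutive with respect to any of its three variables, then the associated global map G : {0,1}^(ℤ×ℤ) → {0,1}^(ℤ×ℤ), defined by G(s)(i,j) = g(s(i,j+1), s(i,j), s(i+1,j)), is surjective. -/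
/-- The global map of the 2D CA with L-shaped neighbourhood:
`G(s)(i,j) = g(s(i,j+1), s(i,j), s(i+1,j))`. -/
def globalMap (g : Fin 2 → Fin 2 → Fin 2 → Fin 2) (s : ℤ × ℤ → Fin 2) :
    ℤ × ℤ → Fin 2 :=
  fun p => g (s (p.1, p.2 + 1)) (s p) (s (p.1 + 1, p.2))

/-!
If `g` is permutive in its first (top) argument, a configuration whose image agrees with a
target `t` on an upper half-plane `j ≥ j₀` is built row by row, each row being solved from the
one below it. Every finite set of sites lies in such a half-plane, so compactness of
`{0,1}^(ℤ×ℤ)` yields an exact preimage of `t`. The other two cases reduce to this one by a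
change of coordinates: the transposition `(i, j) ↦ (j, i)` exchanges the top and right
neighbours, and the shear `(i, j) ↦ (i, -(i + j))` makes the centre cell the top neighbour of
the other two.
-/

section Compactness

variable {X ι Y : Type*} [TopologicalSpace X] [CompactSpace X] [TopologicalSpace Y] [T1Space Y]

theorem exists_eq_of_forall_finset_exists_eqOn (f : X → ι → Y)
    (hf : ∀ i, Continuous fun x => f x i) (t : ι → Y)
    (h : ∀ F : Finset ι, ∃ x, ∀ i ∈ F, f x i = t i) : ∃ x, f x = t := by
  classical
  let sol : Finset ι → Set X := fun F => ⋂ i ∈ F, (fun x => f x i) ⁻¹' {t i}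
  have hclosed : ∀ F, IsClosed (sol F) := fun F =>
    isClosed_biInter fun i _ => isClosed_singleton.preimage (hf i)
  have hdir : Directed (· ⊇ ·) sol := fun F F' =>
    ⟨F ∪ F', Set.biInter_subset_biInter_left fun _ => Finset.mem_union_left _,
      Set.biInter_subset_biInter_left fun _ => Finset.mem_union_right _⟩
  obtain ⟨x, hx⟩ := IsCompact.nonempty_iInter_of_directed_nonempty_isCompact_isClosed sol hdir
    (fun F => (h F).imp fun _ => Set.mem_iInter₂.mpr) (fun F => (hclosed F).isCompact) hclosed
  exact ⟨x, funext fun i =>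
    Set.mem_iInter₂.mp (Set.mem_iInter.mp hx {i}) i (Finset.mem_singleton_self i)⟩

end Compactness

theorem Function.Surjective.of_semiconj {α α' β β' γ : Type*} {G : (α → γ) → β → γ}
    {H : (α' → γ) → β' → γ} (e : α → α') (f : β ≃ β') (hGH : ∀ s, G (s ∘ e) = H s ∘ f)
    (hH : Function.Surjective H) : Function.Surjective G := fun t => by
  obtain ⟨s, hs⟩ := hH (t ∘ f.symm)
  exact ⟨s ∘ e, by rw [hGH, hs, Function.comp_assoc, f.symm_comp_self, Function.comp_id]⟩

theorem continuous_globalMap_apply (g : Fin 2 → Fin 2 → Fin 2 → Fin 2) (p : ℤ × ℤ) :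
    Continuous fun s => globalMap g s p :=
  show Continuous ((fun q : Fin 2 × Fin 2 × Fin 2 => g q.1 q.2.1 q.2.2) ∘
      fun s : ℤ × ℤ → Fin 2 => (s (p.1, p.2 + 1), s p, s (p.1 + 1, p.2))) from
    continuous_of_discreteTopology.comp (by fun_prop)

theorem globalMap_comp_swap (g : Fin 2 → Fin 2 → Fin 2 → Fin 2) (s : ℤ × ℤ → Fin 2) :
    globalMap g (s ∘ Prod.swap) = globalMap (fun x y z => g z y x) s ∘ Equiv.prodComm ℤ ℤ :=
  rfl

def diagonalShear : Equiv.Perm (ℤ × ℤ) where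
  toFun p := (p.1, -(p.1 + p.2) - 1)
  invFun p := (p.1, -(p.1 + p.2) - 1)
  left_inv p := by ext <;> dsimp only; ring
  right_inv p := by ext <;> dsimp only; ring

theorem globalMap_comp_shear (g : Fin 2 → Fin 2 → Fin 2 → Fin 2) (s : ℤ × ℤ → Fin 2) :
    globalMap g (s ∘ fun p => (p.1, -(p.1 + p.2))) =
      globalMap (fun x y z => g y x z) s ∘ diagonalShear := by
  funext p
  simp only [globalMap, Function.comp_apply, diagonalShear, Equiv.coe_fn_mk]
  congr 2 <;> ring_nf

theorem exists_globalMap_eqOn_halfPlane (g : Fin 2 → Fin 2 → Fin 2 → Fin 2)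
    (hg : ∀ y z, Function.Surjective fun x => g x y z) (t : ℤ × ℤ → Fin 2) (j₀ : ℤ) :
    ∃ s, ∀ p : ℤ × ℤ, j₀ ≤ p.2 → globalMap g s p = t p := by
  let solve (y z : Fin 2) := Function.surjInv (hg y z)
  let row : ℕ → ℤ → Fin 2 := fun n => Nat.rec (fun _ => 0)
    (fun n r i => solve (r i) (r (i + 1)) (t (i, j₀ + n))) n
  refine ⟨fun p => row (p.2 - j₀).toNat p.1, ?_⟩
  rintro ⟨i, j⟩ (hj : j₀ ≤ j)
  obtain ⟨n, rfl⟩ : ∃ n : ℕ, j = j₀ + n := ⟨(j - j₀).toNat, by omega⟩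
  have hrow : (j₀ + n + 1 - j₀).toNat = n + 1 := by omega
  have hrow' : (j₀ + n - j₀).toNat = n := by omega
  simp only [globalMap, hrow, hrow']
  exact Function.surjInv_eq (hg _ _) _

theorem globalMap_surjective_of_surjective_fst (g : Fin 2 → Fin 2 → Fin 2 → Fin 2)
    (hg : ∀ y z, Function.Surjective fun x => g x y z) : Function.Surjective (globalMap g) := by
  intro t
  refine exists_eq_of_forall_finset_exists_eqOn _ (continuous_globalMap_apply g) t fun F => ?_
  obtain ⟨j₀, hj₀⟩ := (F.image Prod.snd).bddBelow
  obtain ⟨s, hs⟩ := exists_globalMap_eqOn_halfPlane g hg t j₀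
  exact ⟨s, fun p hp => hs p (hj₀ (Finset.mem_coe.2 (Finset.mem_image_of_mem _ hp)))⟩

/-- if the local rule is permutive with respect to any of its
three variables, then the global map is surjective. -/
theorem stmt8 (g : Fin 2 → Fin 2 → Fin 2 → Fin 2)
    (hg : (∀ y z, Function.Bijective (fun x => g x y z)) ∨
          (∀ x z, Function.Bijective (fun y => g x y z)) ∨
          (∀ x y, Function.Bijective (fun z => g x y z))) :
    Function.Surjective (globalMap g) := by
  rcases hg with hx | hy | hz
  · exact globalMap_surjective_of_surjective_fst g fun y z => (hx y z).surjective
  · exact .of_semiconj _ diagonalShear (globalMap_comp_shear g)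
      (globalMap_surjective_of_surjective_fst _ fun y z => (hy y z).surjective)
  · exact .of_semiconj Prod.swap (Equiv.prodComm ℤ ℤ) (globalMap_comp_swap g)
      (globalMap_surjective_of_surjective_fst _ fun y z => (hz z y).surjective)
end
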